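/- arXiv:2602.21332 — 3 statements merged into one kernel-verified Lean document; each statement's English description precedes it below -/
import Mathlib

section
/- An instance of 3-Partition with 3q integers, all strictly between B/4 and B/2 and summing to qB, is a yes-instance if and only if the instance obtained by adding the three integers B/2 − 2, B/4 + 1, B/4 + 1 (with q+1 target triplets and the same bound B) is a yes-instance, assuming B ≥ 8 and B divisible by 4. -/
/-! In a partition of the augmented instance, the triple of `B/2 - 2` needs two more elements
summing to `B/2 + 2`, and every other element is at least `B/4 + 1`, so both equal `B/4 + 1`.
Swapping them with the two new copies of `B/4 + 1` changes no triple sum and makes the three new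
integers a triple of their own; removing that triple leaves a partition of the original instance.
Conversely, a partition of the original instance extends by the new triple. -/

open Finset

section

variable {ι κ : Type*} [Fintype ι] [DecidableEq κ]

/-- The triples of the partition are the fibres of `g`. -/
def IsThreePartition (w : ι → ℕ) (B : ℕ) (g : ι → κ) : Prop :=
  ∀ t, (univ.filter (fun i => g i = t)).card = 3 ∧
    ∑ i ∈ univ.filter (fun i => g i = t), w i = B

namespace IsThreePartition

variable {w : ι → ℕ} {B : ℕ} {g : ι → κ}

theorem exists_apply_eq_ne_ne [DecidableEq ι] (hg : IsThreePartition w B g) (a d : ι) :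
    ∃ b, g b = g a ∧ b ≠ a ∧ b ≠ d := by
  have hpos : 0 < (((univ.filter (fun i => g i = g a)).erase a).erase d).card := by
    have h₁ := pred_card_le_card_erase (s := univ.filter (fun i => g i = g a)) (a := a)
    have h₂ := pred_card_le_card_erase (s := (univ.filter (fun i => g i = g a)).erase a) (a := d)
    have := (hg (g a)).1
    omega
  obtain ⟨b, hb⟩ := card_pos.mp hpos
  simp only [mem_erase, mem_filter, mem_univ, true_and] at hb
  exact ⟨b, hb.2.2, hb.2.1, hb.1⟩

theorem filter_apply_eq_eq [DecidableEq ι] (hg : IsThreePartition w B g) {a b c : ι}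
    (hab : a ≠ b) (hac : a ≠ c) (hbc : b ≠ c) (hb : g b = g a) (hc : g c = g a) :
    univ.filter (fun i => g i = g a) = {a, b, c} := by
  refine (eq_of_subset_of_card_le ?_ ?_).symm
  · intro i hi
    simp only [mem_insert, mem_singleton] at hi
    rcases hi with rfl | rfl | rfl <;> simp [*]
  · rw [(hg (g a)).1, card_eq_three.mpr ⟨a, b, c, hab, hac, hbc, rfl⟩]

theorem eq_or_eq_or_eq_of_apply_eq [DecidableEq ι] (hg : IsThreePartition w B g) {a b c k : ι}
    (hab : a ≠ b) (hac : a ≠ c) (hbc : b ≠ c) (hb : g b = g a) (hc : g c = g a)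
    (hk : g k = g a) : k = a ∨ k = b ∨ k = c := by
  have hmem : k ∈ univ.filter (fun i => g i = g a) := by simpa using hk
  simpa [hg.filter_apply_eq_eq hab hac hbc hb hc] using hmem

theorem add_add_eq [DecidableEq ι] (hg : IsThreePartition w B g) {a b c : ι}
    (hab : a ≠ b) (hac : a ≠ c) (hbc : b ≠ c) (hb : g b = g a) (hc : g c = g a) :
    w a + w b + w c = B := by
  rw [← (hg (g a)).2, hg.filter_apply_eq_eq hab hac hbc hb hc,
    sum_insert (by simp [hab, hac]), sum_pair hbc, add_assoc]

theorem comp_perm (hg : IsThreePartition w B g) (π : Equiv.Perm ι) (hπ : ∀ i, w (π i) = w i) :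
    IsThreePartition w B (g ∘ π) := by
  intro t
  have hfiber : univ.filter (fun i => (g ∘ π) i = t) =
      (univ.filter (fun i => g i = t)).map π.symm.toEmbedding := by
    ext i
    simp [mem_map_equiv]
  rw [hfiber, card_map, sum_map]
  refine ⟨(hg t).1, ?_⟩
  simpa [← hπ (π.symm _)] using (hg t).2

theorem comp_swap [DecidableEq ι] (hg : IsThreePartition w B g) {a b : ι} (hab : w a = w b) :
    IsThreePartition w B (g ∘ Equiv.swap a b) :=
  hg.comp_perm _ fun i => by
    rw [Equiv.swap_apply_def]
    split_ifs with hia hib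
    · rw [hia, hab]
    · rw [hib, hab]
    · rfl

theorem perm_comp (hg : IsThreePartition w B g) (σ : Equiv.Perm κ) :
    IsThreePartition w B (σ ∘ g) := by
  intro t
  simpa only [Function.comp_apply, ← Equiv.eq_symm_apply] using hg (σ.symm t)

theorem exists_apply_eq_apply_eq [DecidableEq ι] (hg : IsThreePartition w B g) {a n₁ n₂ : ι}
    (h₁ : n₁ ≠ a) (h₂ : n₂ ≠ a) (h₁₂ : n₁ ≠ n₂) (hw : w n₁ = w n₂)
    (htriple : ∀ b c, a ≠ b → a ≠ c → b ≠ c → w a + w b + w c = B → w b = w n₁) :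
    ∃ g' : ι → κ, IsThreePartition w B g' ∧ g' n₁ = g' a ∧ g' n₂ = g' a := by
  have hmate : ∀ g' : ι → κ, IsThreePartition w B g' → ∀ b, g' b = g' a → b ≠ a → w b = w n₁ := by
    intro g' hg' b hb hba
    obtain ⟨c, hc, hca, hcb⟩ := hg'.exists_apply_eq_ne_ne a b
    exact htriple b c hba.symm hca.symm hcb.symm (hg'.add_add_eq hba.symm hca.symm hcb.symm hb hc)
  obtain ⟨b, hb, hba, -⟩ := hg.exists_apply_eq_ne_ne a a
  set g₁ := g ∘ Equiv.swap n₁ b with hg₁def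
  have hg₁ : IsThreePartition w B g₁ := hg.comp_swap (hmate g hg b hb hba).symm
  have hg₁a : g₁ a = g a := by
    rw [hg₁def, Function.comp_apply, Equiv.swap_apply_of_ne_of_ne h₁.symm hba.symm]
  have hg₁n₁ : g₁ n₁ = g₁ a := by rw [hg₁a, hg₁def, Function.comp_apply, Equiv.swap_apply_left, hb]
  obtain ⟨c, hc, hca, hcn₁⟩ := hg₁.exists_apply_eq_ne_ne a n₁
  set g₂ := g₁ ∘ Equiv.swap n₂ c with hg₂def
  have hg₂ : IsThreePartition w B g₂ := hg₁.comp_swap (by rw [← hw, hmate g₁ hg₁ c hc hca])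
  have hg₂a : g₂ a = g₁ a := by
    rw [hg₂def, Function.comp_apply, Equiv.swap_apply_of_ne_of_ne h₂.symm hca.symm]
  refine ⟨g₂, hg₂, ?_, ?_⟩
  · rw [hg₂a, hg₂def, Function.comp_apply, Equiv.swap_apply_of_ne_of_ne h₁₂ hcn₁.symm, hg₁n₁]
  · rw [hg₂a, hg₂def, Function.comp_apply, Equiv.swap_apply_left, hc]

end IsThreePartition

end

theorem isThreePartition_iff_of_castAdd {n q B : ℕ} {y : Fin (n + 3) → ℕ}
    {g : Fin (n + 3) → Fin (q + 1)} {f : Fin n → Fin q}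
    (hf : ∀ k, g (Fin.castAdd 3 k) = (f k).castSucc)
    (hlast : ∀ j, g (Fin.natAdd n j) = Fin.last q) :
    IsThreePartition y B g ↔
      IsThreePartition (fun k => y (Fin.castAdd 3 k)) B f ∧ ∑ j, y (Fin.natAdd n j) = B := by
  have hcast : ∀ s : Fin q, univ.filter (fun i => g i = s.castSucc) =
      (univ.filter (fun k => f k = s)).map (Fin.castAddEmb 3) := by
    intro s
    ext i
    refine Fin.addCases (fun k => ?_) (fun j => ?_) i
    · simp [hf]
    · simp [hlast, Fin.ext_iff]
      omega
  have hlast' : univ.filter (fun i => g i = Fin.last q) = univ.map (Fin.natAddEmb n) := by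
    ext i
    refine Fin.addCases (fun k => ?_) (fun j => ?_) i
    · simp [hf, Fin.ext_iff]
      omega
    · simp [hlast]
  simp only [IsThreePartition, Fin.forall_fin_succ', hcast, hlast', card_map, sum_map, card_univ,
    Fintype.card_fin]
  simp

theorem IsThreePartition.exists_castAdd {n q B : ℕ} {y : Fin (n + 3) → ℕ}
    {g : Fin (n + 3) → Fin (q + 1)} (hg : IsThreePartition y B g)
    (hw : y (Fin.natAdd n 1) = y (Fin.natAdd n 2))
    (htriple : ∀ b c, Fin.natAdd n 0 ≠ b → Fin.natAdd n 0 ≠ c → b ≠ c →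
      y (Fin.natAdd n 0) + y b + y c = B → y b = y (Fin.natAdd n 1)) :
    ∃ f : Fin n → Fin q, IsThreePartition (fun k => y (Fin.castAdd 3 k)) B f := by
  have hn : ∀ i j : Fin 3, i ≠ j → Fin.natAdd n i ≠ Fin.natAdd n j :=
    fun _ _ => (Fin.natAdd_injective 3 n).ne
  obtain ⟨g₀, hg₀, h₁, h₂⟩ := hg.exists_apply_eq_apply_eq (hn 1 0 (by decide))
    (hn 2 0 (by decide)) (hn 1 2 (by decide)) hw htriple
  set g' := Equiv.swap (g₀ (Fin.natAdd n 0)) (Fin.last q) ∘ g₀ with hg'def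
  have hg' : IsThreePartition y B g' := hg₀.perm_comp _
  have hlast : ∀ j, g' (Fin.natAdd n j) = Fin.last q := by
    intro j
    have : g₀ (Fin.natAdd n j) = g₀ (Fin.natAdd n 0) := by fin_cases j <;> simp [h₁, h₂]
    rw [hg'def, Function.comp_apply, this, Equiv.swap_apply_left]
  have hcast : ∀ k, g' (Fin.castAdd 3 k) ≠ Fin.last q := by
    intro k hk
    have := hg'.eq_or_eq_or_eq_of_apply_eq (hn 0 1 (by decide)) (hn 0 2 (by decide))
      (hn 1 2 (by decide)) ((hlast 1).trans (hlast 0).symm) ((hlast 2).trans (hlast 0).symm)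
      (hk.trans (hlast 0).symm)
    simp only [Fin.ext_iff, Fin.val_castAdd, Fin.val_natAdd] at this
    omega
  exact ⟨fun k => (g' (Fin.castAdd 3 k)).castPred (hcast k),
    ((isThreePartition_iff_of_castAdd (fun k => (Fin.castSucc_castPred _ _).symm) hlast).1 hg').1⟩

/-- Adding the three integers `B/2 - 2`, `B/4 + 1`, `B/4 + 1` (and one more
target triple) to a 3-Partition instance whose integers lie strictly between
`B/4` and `B/2` preserves the yes/no status of the instance. -/
theorem three_partition_add_triple (q B : ℕ) (hB : 8 ≤ B)
    (hB4 : 4 ∣ B) (x : Fin (3 * q) → ℕ)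
    (hlow : ∀ i, B < 4 * x i)
    (y : Fin (3 * q + 3) → ℕ)
    (hy1 : ∀ (i : Fin (3 * q + 3)) (h : (i : ℕ) < 3 * q), y i = x ⟨i, h⟩)
    (hy2 : y ⟨3 * q, by omega⟩ = B / 2 - 2)
    (hy3 : y ⟨3 * q + 1, by omega⟩ = B / 4 + 1)
    (hy4 : y ⟨3 * q + 2, by omega⟩ = B / 4 + 1) :
    (∃ f : Fin (3 * q) → Fin q, ∀ t : Fin q,
        (Finset.univ.filter (fun i => f i = t)).card = 3 ∧
        ∑ i ∈ Finset.univ.filter (fun i => f i = t), x i = B) ↔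
    (∃ g : Fin (3 * q + 3) → Fin (q + 1), ∀ t : Fin (q + 1),
        (Finset.univ.filter (fun i => g i = t)).card = 3 ∧
        ∑ i ∈ Finset.univ.filter (fun i => g i = t), y i = B) := by
  have hyx : (fun k => y (Fin.castAdd 3 k)) = x := funext fun k => hy1 _ k.isLt
  have hy₀ : y (Fin.natAdd (3 * q) 0) = B / 2 - 2 := hy2
  have hy₁ : y (Fin.natAdd (3 * q) 1) = B / 4 + 1 := hy3
  have hy₂ : y (Fin.natAdd (3 * q) 2) = B / 4 + 1 := hy4
  have hge : ∀ k, Fin.natAdd (3 * q) 0 ≠ k → B / 4 + 1 ≤ y k := by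
    refine Fin.addCases (fun k _ => ?_) (fun j hj => ?_)
    · have := congrFun hyx k
      have := hlow k
      omega
    · fin_cases j
      exacts [absurd rfl hj, hy₁.ge, hy₂.ge]
  constructor
  · rintro ⟨f, hf⟩
    refine ⟨Fin.addCases (fun k => (f k).castSucc) (fun _ => Fin.last q), ?_⟩
    refine (isThreePartition_iff_of_castAdd (by simp) (by simp)).2 ⟨hyx ▸ hf, ?_⟩
    rw [Fin.sum_univ_three, hy₀, hy₁, hy₂]
    omega
  · rintro ⟨g, hg : IsThreePartition y B g⟩
    refine hyx ▸ hg.exists_castAdd (hy₁.trans hy₂.symm) fun b c hb hc _ hsum => ?_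
    have := hge b hb
    have := hge c hc
    omega
end

section
/- For any two rankings (permutations) σ, τ of n elements, the Spearman footrule distance satisfies F(σ, τ) ≤ 2·K(σ, τ), where K is the Kendall-tau distance (number of pairwise inversions between σ and τ). -/
/-- The Spearman footrule distance between two rankings. -/
def footrule {n : ℕ} (σ τ : Equiv.Perm (Fin n)) : ℤ :=
  ∑ i, |((σ i : ℕ) : ℤ) - ((τ i : ℕ) : ℤ)|

/-- The Kendall-tau distance: the number of discordant pairs. -/
def kendallTau {n : ℕ} (σ τ : Equiv.Perm (Fin n)) : ℕ :=
  (Finset.univ.filter (fun p : Fin n × Fin n =>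
    p.1 < p.2 ∧ ((σ p.1 < σ p.2) ↔ (τ p.2 < τ p.1)))).card

open Finset

private lemma card_lt_filter {n : ℕ} (σ : Equiv.Perm (Fin n)) (i : Fin n) :
    (univ.filter (fun j => σ j < σ i)).card = (σ i : ℕ) := by
  rw [show ((σ i : ℕ)) = (Finset.Iio (σ i)).card by simp]
  apply Finset.card_bij (fun j _ => σ j)
  · intro a ha; simpa using (Finset.mem_filter.mp ha).2
  · intro a _ b _ h; exact σ.injective h
  · intro b hb
    refine ⟨σ.symm b, ?_, by simp⟩
    simp only [mem_filter, mem_univ, true_and, Equiv.apply_symm_apply]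
    simpa using hb

private lemma iff_swap {m : ℕ} {a b c d : Fin m} (hab : a ≠ b) (hcd : c ≠ d)
    (h : a < b ↔ d < c) : b < a ↔ c < d := by
  have hab' : (a : ℕ) ≠ b := fun h' => hab (Fin.ext h')
  have hcd' : (c : ℕ) ≠ d := fun h' => hcd (Fin.ext h')
  simp only [Fin.lt_def] at *
  omega

/-- The pointwise bound: the displacement of `i` is at most the number of
elements discordant with `i`. -/
private lemma pointwise_bound {n : ℕ} (σ τ : Equiv.Perm (Fin n)) (i : Fin n) :
    |((σ i : ℕ) : ℤ) - ((τ i : ℕ) : ℤ)| ≤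
      ((univ.filter (fun j => i ≠ j ∧ ((σ i < σ j) ↔ (τ j < τ i)))).card : ℤ) := by
  set S := univ.filter (fun j => σ j < σ i) with hSdef
  set T := univ.filter (fun j => τ j < τ i) with hTdef
  set D := univ.filter (fun j => i ≠ j ∧ ((σ i < σ j) ↔ (τ j < τ i))) with hDdef
  have hS : S.card = (σ i : ℕ) := card_lt_filter σ i
  have hT : T.card = (τ i : ℕ) := card_lt_filter τ i
  have hsub1 : S \ T ⊆ D := by
    intro j hj
    simp only [hSdef, hTdef, hDdef, mem_sdiff, mem_filter, mem_univ, true_and] at hj ⊢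
    obtain ⟨h1, h2⟩ := hj
    refine ⟨fun h => by simp [h] at h1, ?_⟩
    constructor
    · intro h; exact absurd h h1.asymm
    · intro h; exact absurd h h2
  have hsub2 : T \ S ⊆ D := by
    intro j hj
    simp only [hSdef, hTdef, hDdef, mem_sdiff, mem_filter, mem_univ, true_and] at hj ⊢
    obtain ⟨h1, h2⟩ := hj
    have hne : j ≠ i := fun h => by simp [h] at h1
    refine ⟨hne.symm, ?_⟩
    have hlt : σ i < σ j := by
      rcases lt_or_ge (σ i) (σ j) with h | h
      · exact h
      · rcases lt_or_eq_of_le h with h | h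
        · exact absurd h h2
        · exact absurd (σ.injective h) hne
    simp [hlt, h1]
  have hdisj : Disjoint (S \ T) (T \ S) := disjoint_sdiff_sdiff
  have hcard : (S \ T).card + (T \ S).card ≤ D.card := by
    rw [← Finset.card_union_of_disjoint hdisj]
    exact Finset.card_le_card (union_subset hsub1 hsub2)
  have hS_le : S.card ≤ T.card + (S \ T).card := by
    calc S.card ≤ (T ∪ (S \ T)).card := Finset.card_le_card (fun j hj => by
          by_cases h : j ∈ T
          · exact mem_union_left _ h
          · exact mem_union_right _ (mem_sdiff.mpr ⟨hj, h⟩))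
      _ ≤ T.card + (S \ T).card := Finset.card_union_le _ _
  have hT_le : T.card ≤ S.card + (T \ S).card := by
    calc T.card ≤ (S ∪ (T \ S)).card := Finset.card_le_card (fun j hj => by
          by_cases h : j ∈ S
          · exact mem_union_left _ h
          · exact mem_union_right _ (mem_sdiff.mpr ⟨hj, h⟩))
      _ ≤ S.card + (T \ S).card := Finset.card_union_le _ _
  rw [abs_le]
  omega

/-- Diaconis–Graham inequality (upper half): the footrule distance is at most
twice the Kendall-tau distance. -/
theorem footrule_le_two_mul_kendall (n : ℕ) (σ τ : Equiv.Perm (Fin n)) :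
    footrule σ τ ≤ 2 * (kendallTau σ τ : ℤ) := by
  classical
  -- Step 1: footrule ≤ sum of discordance counts
  have h1 : footrule σ τ ≤
      ∑ i, ((univ.filter (fun j => i ≠ j ∧ ((σ i < σ j) ↔ (τ j < τ i)))).card : ℤ) := by
    unfold footrule
    exact Finset.sum_le_sum (fun i _ => pointwise_bound σ τ i)
  -- Step 2: sum of counts = card of discordant ordered pairs
  have h2 : ∑ i, (univ.filter (fun j => i ≠ j ∧ ((σ i < σ j) ↔ (τ j < τ i)))).card =
      (univ.filter (fun p : Fin n × Fin n =>
        p.1 ≠ p.2 ∧ ((σ p.1 < σ p.2) ↔ (τ p.2 < τ p.1)))).card := by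
    simp only [Finset.card_filter]
    rw [Fintype.sum_prod_type]
  -- Step 3: card of discordant ordered pairs = 2 * kendallTau
  have h3 : (univ.filter (fun p : Fin n × Fin n =>
      p.1 ≠ p.2 ∧ ((σ p.1 < σ p.2) ↔ (τ p.2 < τ p.1)))).card = 2 * kendallTau σ τ := by
    set D := univ.filter (fun p : Fin n × Fin n =>
      p.1 ≠ p.2 ∧ ((σ p.1 < σ p.2) ↔ (τ p.2 < τ p.1))) with hDdef
    have hsplit : (D.filter (fun p => p.1 < p.2)).card
        + (D.filter (fun p => ¬ p.1 < p.2)).card = D.card :=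
      Finset.card_filter_add_card_filter_not _
    have hlt : D.filter (fun p => p.1 < p.2) = univ.filter (fun p : Fin n × Fin n =>
        p.1 < p.2 ∧ ((σ p.1 < σ p.2) ↔ (τ p.2 < τ p.1))) := by
      ext p
      simp only [hDdef, mem_filter, mem_univ, true_and]
      constructor
      · rintro ⟨⟨_, h⟩, hlt⟩; exact ⟨hlt, h⟩
      · rintro ⟨hlt, h⟩; exact ⟨⟨hlt.ne, h⟩, hlt⟩
    have hgt : (D.filter (fun p => ¬ p.1 < p.2)).card
        = (univ.filter (fun p : Fin n × Fin n =>
            p.1 < p.2 ∧ ((σ p.1 < σ p.2) ↔ (τ p.2 < τ p.1)))).card := by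
      refine Finset.card_bij' (fun p _ => p.swap) (fun p _ => p.swap) ?_ ?_ ?_ ?_
      · intro p hp
        simp only [hDdef, mem_filter, mem_univ, true_and, Prod.fst_swap, Prod.snd_swap] at hp ⊢
        obtain ⟨⟨hne, hiff⟩, hnlt⟩ := hp
        have hlt' : p.2 < p.1 := hne.lt_or_gt.resolve_left hnlt
        refine ⟨hlt', ?_⟩
        have hσne : σ p.1 ≠ σ p.2 := fun h => hne (σ.injective h)
        have hτne : τ p.1 ≠ τ p.2 := fun h => hne (τ.injective h)
        exact iff_swap hσne hτne hiff
      · intro p hp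
        simp only [hDdef, mem_filter, mem_univ, true_and, Prod.fst_swap, Prod.snd_swap] at hp ⊢
        obtain ⟨hlt', hiff⟩ := hp
        refine ⟨⟨hlt'.ne', ?_⟩, not_lt_of_gt hlt'⟩
        have hσne : σ p.1 ≠ σ p.2 := fun h => hlt'.ne (σ.injective h)
        have hτne : τ p.1 ≠ τ p.2 := fun h => hlt'.ne (τ.injective h)
        exact iff_swap hσne hτne hiff
      · intro p _; exact Prod.swap_swap p
      · intro p _; exact Prod.swap_swap p
    rw [← hsplit, hlt, hgt, kendallTau]
    ring
  calc footrule σ τ ≤ _ := h1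
    _ = ((univ.filter (fun p : Fin n × Fin n =>
        p.1 ≠ p.2 ∧ ((σ p.1 < σ p.2) ↔ (τ p.2 < τ p.1)))).card : ℤ) := by
        push_cast [← h2]; rfl
    _ = 2 * (kendallTau σ τ : ℤ) := by rw [h3]; push_cast; ring
end

section
/- For any two rankings σ, τ of n elements, the Kendall-tau distance is at most the Spearman footrule distance: K(σ, τ) ≤ F(σ, τ). -/
/-!
Orient each discordant pair `(x, y)` so that `σ x < σ y` and `τ y < τ x`. If `σ y ≤ τ x`,
charge the pair to `x`: then `σ y ∈ (σ x, τ x]`, so `x` is charged at most `(τ x - σ x)⁺` times.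
Otherwise `τ y < τ x < σ y`; charge it to `y`, which is charged at most `(σ y - τ y)⁺` times.
Summing, the number of discordant pairs is at most `∑ x, ((τ x - σ x)⁺ + (σ x - τ x)⁺) = F`.
-/

open Finset Function

section Discordance

variable {α : Type*} [Fintype α]

def discordantPairs (σ τ : α → ℕ) : Finset (α × α) :=
  {p | σ p.1 < σ p.2 ∧ τ p.2 < τ p.1}

lemma card_filter_prod_eq_sum {β : Type*} [Fintype β] (P : α → β → Prop)
    [∀ x y, Decidable (P x y)] :
    #{p : α × β | P p.1 p.2} = ∑ x, #{y | P x y} := by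
  simp only [card_filter, Fintype.sum_prod_type]

lemma card_filter_mem_Ioc_le {σ : α → ℕ} (hσ : Injective σ) (a b : ℕ) :
    #{y | a < σ y ∧ σ y ≤ b} ≤ b - a :=
  calc #{y | a < σ y ∧ σ y ≤ b}
      ≤ #(Ioc a b) := card_le_card_of_injOn σ (fun y hy => by simpa using hy) hσ.injOn
    _ = b - a := Nat.card_Ioc a b

lemma card_pairs_lt_le_le_sum_sub {σ : α → ℕ} (hσ : Injective σ) (τ : α → ℕ) :
    #{p : α × α | σ p.1 < σ p.2 ∧ σ p.2 ≤ τ p.1} ≤ ∑ x, (τ x - σ x) :=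
  (card_filter_prod_eq_sum (fun x y => σ x < σ y ∧ σ y ≤ τ x)).trans_le
    (sum_le_sum fun _ _ => card_filter_mem_Ioc_le hσ _ _)

lemma card_discordantPairs_le {σ τ : α → ℕ} (hσ : Injective σ) (hτ : Injective τ) :
    (#(discordantPairs σ τ) : ℤ) ≤ ∑ x, |(σ x : ℤ) - τ x| := by
  have hchargeFst : #{p ∈ discordantPairs σ τ | σ p.2 ≤ τ p.1} ≤ ∑ x, (τ x - σ x) :=
    calc #{p ∈ discordantPairs σ τ | σ p.2 ≤ τ p.1}
        ≤ #{p : α × α | σ p.1 < σ p.2 ∧ σ p.2 ≤ τ p.1} := card_le_card fun p hp => by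
          simp only [discordantPairs, mem_filter, mem_univ, true_and] at hp ⊢
          exact ⟨hp.1.1, hp.2⟩
      _ ≤ ∑ x, (τ x - σ x) := card_pairs_lt_le_le_sum_sub hσ τ
  have hchargeSnd : #{p ∈ discordantPairs σ τ | ¬σ p.2 ≤ τ p.1} ≤ ∑ x, (σ x - τ x) :=
    calc #{p ∈ discordantPairs σ τ | ¬σ p.2 ≤ τ p.1}
        ≤ #{p : α × α | τ p.2 < τ p.1 ∧ τ p.1 ≤ σ p.2} := card_le_card fun p hp => by
          simp only [discordantPairs, mem_filter, mem_univ, true_and] at hp ⊢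
          omega
      _ = #{p : α × α | τ p.1 < τ p.2 ∧ τ p.2 ≤ σ p.1} :=
          card_equiv (Equiv.prodComm α α) (by simp)
      _ ≤ ∑ x, (σ x - τ x) := card_pairs_lt_le_le_sum_sub hτ σ
  have hcount : #(discordantPairs σ τ) ≤ ∑ x, ((τ x - σ x) + (σ x - τ x)) := by
    rw [sum_add_distrib, ← card_filter_add_card_filter_not (fun p : α × α => σ p.2 ≤ τ p.1)]
    exact add_le_add hchargeFst hchargeSnd
  calc (#(discordantPairs σ τ) : ℤ)
      ≤ ∑ x, (((τ x - σ x : ℕ) : ℤ) + ((σ x - τ x : ℕ) : ℤ)) := mod_cast hcount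
    _ = ∑ x, |(σ x : ℤ) - τ x| := sum_congr rfl fun x _ => by
      rcases abs_cases ((σ x : ℤ) - τ x) with ⟨h, _⟩ | ⟨h, _⟩ <;> omega

end Discordance

lemma kendallTau_le_card_discordantPairs {n : ℕ} (σ τ : Equiv.Perm (Fin n)) :
    kendallTau σ τ ≤ #(discordantPairs (fun i => (σ i : ℕ)) (fun i => (τ i : ℕ))) := by
  refine card_le_card_of_injOn (fun p => if σ p.1 < σ p.2 then p else p.swap) ?_ ?_
  · intro p hp
    simp only [coe_filter, Set.mem_ofPred_eq, mem_univ, true_and] at hp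
    have hσ : (σ p.1 : ℕ) ≠ σ p.2 := Fin.val_injective.ne (σ.injective.ne hp.1.ne)
    have hτ : (τ p.1 : ℕ) ≠ τ p.2 := Fin.val_injective.ne (τ.injective.ne hp.1.ne)
    simp only [discordantPairs, coe_filter, Set.mem_ofPred_eq, mem_univ, true_and]
    split_ifs with hlt
    · exact ⟨hlt, hp.2.1 hlt⟩
    · exact ⟨lt_of_le_of_ne (not_lt.1 hlt) hσ.symm,
        lt_of_le_of_ne (not_lt.1 (mt hp.2.2 hlt)) hτ⟩
  · intro p hp q hq hpq
    simp only [coe_filter, Set.mem_ofPred_eq, mem_univ, true_and] at hp hq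
    dsimp only at hpq
    split_ifs at hpq <;> grind

/-- Diaconis–Graham inequality (lower half): the Kendall-tau distance is at most
the footrule distance. -/
theorem kendall_le_footrule (n : ℕ) (σ τ : Equiv.Perm (Fin n)) :
    (kendallTau σ τ : ℤ) ≤ footrule σ τ :=
  calc (kendallTau σ τ : ℤ)
      ≤ #(discordantPairs (fun i => (σ i : ℕ)) (fun i => (τ i : ℕ))) :=
        mod_cast kendallTau_le_card_discordantPairs σ τ
    _ ≤ footrule σ τ :=
        card_discordantPairs_le (Fin.val_injective.comp σ.injective)
          (Fin.val_injective.comp τ.injective)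
end
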